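/- Suppose each f_t : ℝ^d → ℝ is convex and differentiable with g_t = ∇f_t(w_t), the iterates follow w_{t+1} = w_t - η_t ĝ_t with η_t > 0 nonincreasing, ε_t = g_t - ĝ_t, and all iterates and w* lie in a set where ‖w_p - w_q‖_∞ ≤ D_∞. Then the regret R(T) = Σ_{t=1}^T (f_t(w_t) - f_t(w*)) satisfies R(T) ≤ d·D_∞²/(2η_T) + D_∞·√d·Σ_{t=1}^T ‖ε_t‖ + Σ_{t=1}^T (η_t/2)‖ĝ_t‖². -/

import Mathlib

/-!
Convexity gives `f_t(w_t) - f_t(w*) ≤ ⟪g_t, w_t - w*⟫ = ⟪ĝ_t, w_t - w*⟫ + ⟪ε_t, w_t - w*⟫`.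
Expanding `‖w_{t+1} - w*‖² = ‖w_t - w*‖² - 2η_t⟪ĝ_t, w_t - w*⟫ + η_t²‖ĝ_t‖²` turns the first
term into a difference of squared distances over `2η_t` plus `η_t‖ĝ_t‖²/2`; Cauchy–Schwarz and
`‖w_t - w*‖ ≤ √d·D∞` bound the second. Since `1/η_t` is nondecreasing and the squared distances
lie in `[0, d·D∞²]`, the weighted telescoping sum is at most `d·D∞²/(2η_T)`.
-/

open RealInnerProductSpace Finset

theorem ConvexOn.add_le_of_hasFDerivAt {E : Type*} [NormedAddCommGroup E] [NormedSpace ℝ E]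
    {s : Set E} {f : E → ℝ} {f' : E →L[ℝ] ℝ} {x y : E} (hf : ConvexOn ℝ s f) (hx : x ∈ s)
    (hy : y ∈ s) (hf' : HasFDerivAt f f' x) :
    f x + f' (y - x) ≤ f y := by
  set L : ℝ →ᵃ[ℝ] E := AffineMap.lineMap x y
  have hderiv : HasDerivAt (f ∘ L) (f' (y - x)) 0 :=
    hf'.comp_hasDerivAt_of_eq (0 : ℝ) AffineMap.hasDerivAt_lineMap (by simp [L])
  have := (hf.comp_affineMap L).le_slope_of_hasDerivAt (by simpa [L] using hx)
    (by simpa [L] using hy) zero_lt_one hderiv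
  simp only [slope_def_field, Function.comp_apply, L, AffineMap.lineMap_apply_zero,
    AffineMap.lineMap_apply_one, sub_zero, div_one] at this
  linarith

theorem ConvexOn.sub_le_inner_of_hasGradientAt {E : Type*} [NormedAddCommGroup E]
    [InnerProductSpace ℝ E] [CompleteSpace E] {s : Set E} {f : E → ℝ} {g x y : E}
    (hf : ConvexOn ℝ s f) (hx : x ∈ s) (hy : y ∈ s) (hg : HasGradientAt f g x) :
    f x - f y ≤ ⟪g, x - y⟫ := by
  have := hf.add_le_of_hasFDerivAt hx hy (hasGradientAt_iff_hasFDerivAt.mp hg)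
  rw [InnerProductSpace.toDual_apply_apply, ← neg_sub x y, inner_neg_right] at this
  linarith

theorem norm_sub_smul_sub_sq {E : Type*} [NormedAddCommGroup E] [InnerProductSpace ℝ E]
    (x y v : E) (η : ℝ) :
    ‖x - η • v - y‖ ^ 2 = ‖x - y‖ ^ 2 - 2 * η * ⟪v, x - y⟫ + η ^ 2 * ‖v‖ ^ 2 := by
  rw [sub_right_comm, norm_sub_sq_real, real_inner_smul_right, real_inner_comm, norm_smul,
    mul_pow, Real.norm_eq_abs, sq_abs]
  ring

theorem ConvexOn.sub_le_of_inexact_gradient_step {E : Type*} [NormedAddCommGroup E]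
    [InnerProductSpace ℝ E] [CompleteSpace E] {s : Set E} {f : E → ℝ} {g ĝ x y : E} {η : ℝ}
    (hf : ConvexOn ℝ s f) (hx : x ∈ s) (hy : y ∈ s) (hg : HasGradientAt f g x) (hη : 0 < η) :
    f x - f y ≤ (‖x - y‖ ^ 2 - ‖x - η • ĝ - y‖ ^ 2) / (2 * η) + ‖g - ĝ‖ * ‖x - y‖
      + η / 2 * ‖ĝ‖ ^ 2 := by
  have hdescent : ⟪ĝ, x - y⟫ = (‖x - y‖ ^ 2 - ‖x - η • ĝ - y‖ ^ 2) / (2 * η) + η / 2 * ‖ĝ‖ ^ 2 := by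
    rw [norm_sub_smul_sub_sq]
    field_simp
    ring
  calc f x - f y ≤ ⟪g, x - y⟫ := hf.sub_le_inner_of_hasGradientAt hx hy hg
    _ = ⟪ĝ, x - y⟫ + ⟪g - ĝ, x - y⟫ := by rw [inner_sub_left]; ring
    _ ≤ ⟪ĝ, x - y⟫ + ‖g - ĝ‖ * ‖x - y‖ := by gcongr; exact real_inner_le_norm _ _
    _ = _ := by rw [hdescent]; ring

theorem EuclideanSpace.norm_sq_le_card_mul_sq {ι : Type*} [Fintype ι] {x : EuclideanSpace ℝ ι}
    {D : ℝ} (hx : ∀ i, |x i| ≤ D) : ‖x‖ ^ 2 ≤ Fintype.card ι * D ^ 2 := by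
  rw [EuclideanSpace.norm_sq_eq]
  calc ∑ i, ‖x i‖ ^ 2 ≤ ∑ _i : ι, D ^ 2 :=
        sum_le_sum fun i _ => by simpa using pow_le_pow_left₀ (abs_nonneg _) (hx i) 2
    _ = Fintype.card ι * D ^ 2 := by simp

theorem EuclideanSpace.norm_le_sqrt_card_mul {ι : Type*} [Fintype ι] {x : EuclideanSpace ℝ ι}
    {D : ℝ} (hD : 0 ≤ D) (hx : ∀ i, |x i| ≤ D) : ‖x‖ ≤ √(Fintype.card ι) * D := by
  rw [← Real.sqrt_sq (norm_nonneg x), ← Real.sqrt_sq hD, ← Real.sqrt_mul (Nat.cast_nonneg _)]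
  exact Real.sqrt_le_sqrt (norm_sq_le_card_mul_sq hx)

theorem sum_Icc_sub_div_le_of_antitone {a b : ℕ → ℝ} {C : ℝ} (hb : ∀ t, 0 < b t)
    (hb_anti : Antitone b) (ha : ∀ t, 0 ≤ a t) (haC : ∀ t, a t ≤ C) (T : ℕ) :
    ∑ t ∈ Icc 1 T, (a t - a (t + 1)) / b t ≤ C / b T := by
  suffices h : ∑ t ∈ Icc 1 T, (a t - a (t + 1)) / b t ≤ (C - a (T + 1)) / b T from
    h.trans (div_le_div_of_nonneg_right (by linarith [ha (T + 1)]) (hb T).le)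
  induction T with
  | zero => simpa using div_nonneg (sub_nonneg.2 (haC 1)) (hb 0).le
  | succ n ih =>
    calc ∑ t ∈ Icc 1 (n + 1), (a t - a (t + 1)) / b t
        ≤ (C - a (n + 1)) / b n + (a (n + 1) - a (n + 2)) / b (n + 1) := by
          rw [sum_Icc_succ_top (by omega)]; gcongr
      _ ≤ (C - a (n + 1)) / b (n + 1) + (a (n + 1) - a (n + 2)) / b (n + 1) := by
          gcongr ?_ + _
          exact div_le_div_of_nonneg_left (sub_nonneg.2 (haC _)) (hb _) (hb_anti n.le_succ)
      _ = (C - a (n + 2)) / b (n + 1) := by rw [← add_div]; ring_nf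

theorem int8_training_regret_bound_general {d : ℕ} (T : ℕ)
    (f : ℕ → EuclideanSpace ℝ (Fin d) → ℝ)
    (w g ghat ε : ℕ → EuclideanSpace ℝ (Fin d))
    (wstar : EuclideanSpace ℝ (Fin d)) (η : ℕ → ℝ) (D : ℝ) (hD : 0 ≤ D)
    (hconv : ∀ t, ConvexOn ℝ Set.univ (f t))
    (hgrad : ∀ t, HasGradientAt (f t) (g t) (w t))
    (hupd : ∀ t, w (t + 1) = w t - η t • ghat t)
    (hηpos : ∀ t, 0 < η t)
    (hηmono : ∀ s t, s ≤ t → η t ≤ η s)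
    (hε : ∀ t, ε t = g t - ghat t)
    (hdiamstar : ∀ t i, |w t i - wstar i| ≤ D) :
    ∑ t ∈ Icc 1 T, (f t (w t) - f t wstar) ≤
      d * D ^ 2 / (2 * η T)
        + D * Real.sqrt d * ∑ t ∈ Icc 1 T, ‖ε t‖
        + ∑ t ∈ Icc 1 T, η t / 2 * ‖ghat t‖ ^ 2 := by
  have hdist_sq (t : ℕ) : ‖w t - wstar‖ ^ 2 ≤ d * D ^ 2 := by
    simpa using EuclideanSpace.norm_sq_le_card_mul_sq (x := w t - wstar)
      (by simpa using hdiamstar t)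
  have hdist (t : ℕ) : ‖w t - wstar‖ ≤ √d * D := by
    simpa using EuclideanSpace.norm_le_sqrt_card_mul (x := w t - wstar) hD
      (by simpa using hdiamstar t)
  have hstep (t : ℕ) : f t (w t) - f t wstar ≤
      (‖w t - wstar‖ ^ 2 - ‖w (t + 1) - wstar‖ ^ 2) / (2 * η t) + D * √d * ‖ε t‖
        + η t / 2 * ‖ghat t‖ ^ 2 := by
    have := (hconv t).sub_le_of_inexact_gradient_step (Set.mem_univ _) (Set.mem_univ wstar)
      (hgrad t) (hηpos t) (ĝ := ghat t)
    rw [← hupd t, ← hε t] at this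
    linarith [mul_le_mul_of_nonneg_left (hdist t) (norm_nonneg (ε t))]
  calc ∑ t ∈ Icc 1 T, (f t (w t) - f t wstar)
      ≤ ∑ t ∈ Icc 1 T, ((‖w t - wstar‖ ^ 2 - ‖w (t + 1) - wstar‖ ^ 2) / (2 * η t)
          + D * √d * ‖ε t‖ + η t / 2 * ‖ghat t‖ ^ 2) := sum_le_sum fun t _ => hstep t
    _ ≤ _ := by
      rw [sum_add_distrib, sum_add_distrib, ← mul_sum]
      gcongr ?_ + _ + _
      exact sum_Icc_sub_div_le_of_antitone (b := fun t => 2 * η t)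
        (fun t => mul_pos two_pos (hηpos t)) (fun s t hst => by simpa using hηmono s t hst)
        (fun t => sq_nonneg ‖w t - wstar‖) hdist_sq T

/-- Regret bound for SGD with quantized gradients (Theorem 1 of the paper):
convex differentiable losses `f t`, updates `w (t+1) = w t - η t • ĝ t` with
positive nonincreasing learning rates, quantization errors `ε t = g t - ĝ t`,
and all iterates and the comparator `w*` within ℓ∞-distance `D∞` of each other.
Then `R(T) ≤ d·D∞²/(2 η T) + D∞·√d·Σ‖ε t‖ + Σ (η t / 2)‖ĝ t‖²`. -/
theorem int8_training_regret_bound {d : ℕ} (T : ℕ)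
    (f : ℕ → EuclideanSpace ℝ (Fin d) → ℝ)
    (w g ghat ε : ℕ → EuclideanSpace ℝ (Fin d))
    (wstar : EuclideanSpace ℝ (Fin d)) (η : ℕ → ℝ) (D : ℝ) (hD : 0 ≤ D)
    (hconv : ∀ t, ConvexOn ℝ Set.univ (f t))
    (hgrad : ∀ t, HasGradientAt (f t) (g t) (w t))
    (hupd : ∀ t, w (t + 1) = w t - η t • ghat t)
    (hηpos : ∀ t, 0 < η t)
    (hηmono : ∀ s t, s ≤ t → η t ≤ η s)
    (hε : ∀ t, ε t = g t - ghat t)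
    (hdiam : ∀ p q i, |w p i - w q i| ≤ D)
    (hdiamstar : ∀ t i, |w t i - wstar i| ≤ D) :
    ∑ t ∈ Icc 1 T, (f t (w t) - f t wstar) ≤
      d * D ^ 2 / (2 * η T)
        + D * Real.sqrt d * ∑ t ∈ Icc 1 T, ‖ε t‖
        + ∑ t ∈ Icc 1 T, η t / 2 * ‖ghat t‖ ^ 2 :=
  int8_training_regret_bound_general T f w g ghat ε wstar η D hD hconv hgrad hupd hηpos hηmono hε
    hdiamstar
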